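/- arXiv:2604.12653 — 6 statements merged into one kernel-verified Lean document; each statement's English description precedes it below -/
import Mathlib

section
/- Let k ≥ 1 and let [a_i, b_i] for i = 1,…,k be subintervals of [0, m] each of length at least 1. Let Z be the set of linear orders on {1,…,k} realizable by choosing distinct real numbers z_i ∈ [a_i, b_i] and sorting. Then |Z| ≥ k! · ∏_{i=1}^k (b_i − a_i)/m. -/
/-!
Permuting coordinates preserves Lebesgue measure, so the `k!` order cells
`{z | σ i < σ j ↔ z i < z j}` meet the cube `[0, m]^k` in sets of equal volume, whose disjoint
union has volume at most `m^k`. Away from the null set where two coordinates coincide, the box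
`∏ [a i, b i]` is covered by the cells of its realizable orders, hence
`∏ (b i - a i) ≤ |Z| · m^k / k!`.
-/

open MeasureTheory Set Function

theorem Equiv.Perm.eq_of_forall_lt_iff_lt {α : Type*} [LinearOrder α] [WellFoundedLT α]
    {σ τ : Equiv.Perm α} (h : ∀ i j, σ i < σ j ↔ τ i < τ j) : σ = τ := by
  let e : α ≃o α := ⟨σ.symm.trans τ, fun {x y} => by
    simpa using (h (σ.symm y) (σ.symm x)).not.symm⟩
  ext i
  simpa [e] using (congrArg (· (σ i)) (Subsingleton.elim e (OrderIso.refl α))).symm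

theorem volume_setOf_not_injective {ι : Type*} [Fintype ι] :
    volume {z : ι → ℝ | ¬ Injective z} = 0 := by
  classical
  have hsub : {z : ι → ℝ | ¬ Injective z} ⊆ ⋃ i, ⋃ j, ⋃ (_ : i ≠ j), {z | z i = z j} := by
    intro z hz
    simp only [Injective, mem_ofPred_eq, not_forall] at hz
    obtain ⟨i, j, hij, hne⟩ := hz
    exact mem_iUnion₂.2 ⟨i, j, mem_iUnion.2 ⟨hne, hij⟩⟩
  refine measure_mono_null hsub <| measure_iUnion_null fun i => measure_iUnion_null fun j =>
    measure_iUnion_null fun hij => ?_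
  let L : (ι → ℝ) →ₗ[ℝ] ℝ := LinearMap.proj (R := ℝ) (φ := fun _ => ℝ) i - LinearMap.proj j
  have hker : {z : ι → ℝ | z i = z j} = LinearMap.ker L := by
    ext z; simp [L, sub_eq_zero]
  rw [hker]
  refine Measure.addHaar_submodule _ _ fun htop => ?_
  have h1 : Pi.single i (1 : ℝ) ∈ LinearMap.ker L := htop ▸ Submodule.mem_top
  simp [L, Ne.symm hij] at h1

section OrderCell

variable {k : ℕ}

def orderCell (σ : Equiv.Perm (Fin k)) : Set (Fin k → ℝ) :=
  {z | ∀ i j, σ i < σ j ↔ z i < z j}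

theorem exists_mem_orderCell {z : Fin k → ℝ} (hz : Injective z) :
    ∃ σ, z ∈ orderCell σ := by
  have hsort : StrictMono (z ∘ Tuple.sort z) :=
    (Tuple.monotone_sort z).strictMono_of_injective (hz.comp (Tuple.sort z).injective)
  refine ⟨(Tuple.sort z)⁻¹, fun i j => ?_⟩
  simpa using (hsort.lt_iff_lt (a := (Tuple.sort z)⁻¹ i) (b := (Tuple.sort z)⁻¹ j)).symm

theorem pairwise_disjoint_orderCell : Pairwise (Disjoint on orderCell (k := k)) :=
  fun _ _ hne => disjoint_left.2 fun _ hσ hτ =>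
    hne (Equiv.Perm.eq_of_forall_lt_iff_lt fun i j => (hσ i j).trans (hτ i j).symm)

theorem measurableSet_orderCell (σ : Equiv.Perm (Fin k)) : MeasurableSet (orderCell σ) :=
  measurableSet_setOfPred.2 <| Measurable.forall fun i => Measurable.forall fun j =>
    measurable_const.iff <| measurableSet_setOfPred.1 <|
      measurableSet_lt (measurable_pi_apply i) (measurable_pi_apply j)

variable {I : Set ℝ}

theorem volume_orderCell_inter_pi (σ : Equiv.Perm (Fin k)) :
    volume (orderCell σ ∩ univ.pi fun _ => I) =
      volume (orderCell (1 : Equiv.Perm (Fin k)) ∩ univ.pi fun _ => I) := by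
  let T := MeasurableEquiv.piCongrLeft (fun _ : Fin k => ℝ) σ
  have hT : ∀ z i, T z (σ i) = z i := fun z i => MeasurableEquiv.piCongrLeft_apply_apply _ _ _
  have hpre : T ⁻¹' (orderCell 1 ∩ univ.pi fun _ => I) = orderCell σ ∩ univ.pi fun _ => I := by
    ext z
    refine and_congr (σ.forall_congr fun i => σ.forall_congr fun j => ?_)
      (σ.forall_congr fun i => ?_) |>.symm <;> simp [hT]
  rw [← hpre]
  exact (volume_measurePreserving_piCongrLeft (fun _ => ℝ) σ).measure_preimage_equiv _

end OrderCell

section Realizable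

variable {k : ℕ} {I : Set ℝ}

def realizableOrders (S : Set (Fin k → ℝ)) : Set (Equiv.Perm (Fin k)) :=
  {σ | ∃ z ∈ S, Injective z ∧ z ∈ orderCell σ}

theorem factorial_mul_volume_orderCell_inter_pi_le :
    k.factorial * volume (orderCell (1 : Equiv.Perm (Fin k)) ∩ univ.pi fun _ => I) ≤
      volume (univ.pi fun _ : Fin k => I) := by
  -- Restricting the measure, rather than intersecting, needs only the cells to be measurable.
  calc k.factorial * volume (orderCell (1 : Equiv.Perm (Fin k)) ∩ univ.pi fun _ => I)
      = ∑ σ : Equiv.Perm (Fin k), volume.restrict (univ.pi fun _ => I) (orderCell σ) := by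
        simp [Measure.restrict_apply (measurableSet_orderCell _), volume_orderCell_inter_pi,
          Fintype.card_perm]
    _ = volume.restrict (univ.pi fun _ => I) (⋃ σ, orderCell σ) :=
        (tsum_fintype _).symm.trans
          (measure_iUnion pairwise_disjoint_orderCell measurableSet_orderCell).symm
    _ ≤ volume (univ.pi fun _ : Fin k => I) := by
        simpa using measure_mono (μ := volume.restrict _) (subset_univ (⋃ σ, orderCell σ))

theorem volume_le_card_realizableOrders_mul {S : Set (Fin k → ℝ)}
    (hS : S ⊆ univ.pi fun _ => I) :
    volume S ≤ Nat.card (realizableOrders S) *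
      volume (orderCell (1 : Equiv.Perm (Fin k)) ∩ univ.pi fun _ => I) := by
  have hcover : S ⊆ {z | ¬ Injective z} ∪
      ⋃ σ ∈ realizableOrders S, orderCell σ ∩ univ.pi fun _ => I := by
    intro z hz
    by_cases hinj : Injective z
    · obtain ⟨σ, hσ⟩ := exists_mem_orderCell hinj
      exact Or.inr (mem_biUnion ⟨z, hz, hinj, hσ⟩ ⟨hσ, hS hz⟩)
    · exact Or.inl hinj
  calc volume S
      ≤ volume {z : Fin k → ℝ | ¬ Injective z} +
          volume (⋃ σ ∈ realizableOrders S, orderCell σ ∩ univ.pi fun _ => I) :=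
        (measure_mono hcover).trans (measure_union_le _ _)
    _ ≤ ∑' σ : realizableOrders S,
          volume (orderCell (σ : Equiv.Perm (Fin k)) ∩ univ.pi fun _ => I) := by
        rw [volume_setOf_not_injective, zero_add]
        exact measure_biUnion_le _ (to_countable _) _
    _ = Nat.card (realizableOrders S) *
          volume (orderCell (1 : Equiv.Perm (Fin k)) ∩ univ.pi fun _ => I) := by
        simp only [volume_orderCell_inter_pi]
        rw [ENNReal.tsum_const, ENat.card_eq_coe_natCard, ENat.toENNReal_coe]

theorem factorial_mul_volume_le_card_realizableOrders_mul {S : Set (Fin k → ℝ)}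
    (hS : S ⊆ univ.pi fun _ => I) :
    k.factorial * volume S ≤ Nat.card (realizableOrders S) * volume (univ.pi fun _ : Fin k => I) :=
  calc k.factorial * volume S
      ≤ k.factorial * (Nat.card (realizableOrders S) *
          volume (orderCell (1 : Equiv.Perm (Fin k)) ∩ univ.pi fun _ => I)) := by
        gcongr
        exact volume_le_card_realizableOrders_mul hS
    _ = Nat.card (realizableOrders S) *
          (k.factorial * volume (orderCell (1 : Equiv.Perm (Fin k)) ∩ univ.pi fun _ => I)) := by
        ring
    _ ≤ Nat.card (realizableOrders S) * volume (univ.pi fun _ : Fin k => I) := by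
        gcongr
        exact factorial_mul_volume_orderCell_inter_pi_le

end Realizable

theorem factorial_mul_prod_sub_le_card_realizableOrders_mul {k : ℕ} {m : ℝ} {a b : Fin k → ℝ}
    (ha : ∀ i, 0 ≤ a i) (hb : ∀ i, b i ≤ m) (hab : ∀ i, a i ≤ b i) :
    k.factorial * ∏ i, (b i - a i) ≤
      Nat.card (realizableOrders (univ.pi fun i => Icc (a i) (b i))) * m ^ k := by
  have hm : ∀ i : Fin k, 0 ≤ m := fun i => (ha i).trans ((hab i).trans (hb i))
  have key := factorial_mul_volume_le_card_realizableOrders_mul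
    (pi_mono fun i _ => Icc_subset_Icc (ha i) (hb i))
  rw [volume_pi_pi, volume_pi_pi] at key
  simp only [Real.volume_Icc, sub_zero] at key
  rw [← ENNReal.ofReal_prod_of_nonneg fun i _ => sub_nonneg.2 (hab i),
    ← ENNReal.ofReal_prod_of_nonneg fun i _ => hm i, ← ENNReal.ofReal_natCast,
    ← ENNReal.ofReal_natCast, ← ENNReal.ofReal_mul (by positivity),
    ← ENNReal.ofReal_mul (by positivity),
    ENNReal.ofReal_le_ofReal_iff
      (mul_nonneg (by positivity) (Finset.prod_nonneg fun i _ => hm i))] at key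
  simpa using key

theorem stmt_0_general (k : ℕ) (m : ℝ) (a b : Fin k → ℝ)
    (ha : ∀ i, 0 ≤ a i) (hb : ∀ i, b i ≤ m) (hlen : ∀ i, 1 ≤ b i - a i) :
    (k.factorial : ℝ) * ∏ i, (b i - a i) / m ≤
      Nat.card {σ : Equiv.Perm (Fin k) //
        ∃ z : Fin k → ℝ, (∀ i, z i ∈ Set.Icc (a i) (b i)) ∧
          Function.Injective z ∧ (∀ i j, σ i < σ j ↔ z i < z j)} := by
  have hab : ∀ i, a i ≤ b i := fun i => by linarith [hlen i]
  have hmk : 0 < m ^ k :=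
    calc 0 < ∏ i, (b i - a i) := Finset.prod_pos fun i _ => by linarith [hlen i]
      _ ≤ ∏ _i : Fin k, m :=
        Finset.prod_le_prod (fun i _ => sub_nonneg.2 (hab i)) fun i _ => by linarith [ha i, hb i]
      _ = m ^ k := by simp
  have hcard : Nat.card (realizableOrders (univ.pi fun i => Icc (a i) (b i))) =
      Nat.card {σ : Equiv.Perm (Fin k) //
        ∃ z : Fin k → ℝ, (∀ i, z i ∈ Set.Icc (a i) (b i)) ∧
          Function.Injective z ∧ (∀ i j, σ i < σ j ↔ z i < z j)} :=
    Nat.card_congr <| Equiv.subtypeEquivRight fun σ => by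
      simp only [realizableOrders, orderCell, mem_ofPred_eq, mem_univ_pi]
  rw [Finset.prod_div_distrib, Finset.prod_const, Finset.card_univ, Fintype.card_fin,
    ← mul_div_assoc, div_le_iff₀ hmk, ← hcard]
  exact factorial_mul_prod_sub_le_card_realizableOrders_mul ha hb hab

theorem stmt_0 (k : ℕ) (hk : 1 ≤ k) (m : ℝ) (a b : Fin k → ℝ)
    (ha : ∀ i, 0 ≤ a i) (hb : ∀ i, b i ≤ m) (hlen : ∀ i, 1 ≤ b i - a i) :
    (k.factorial : ℝ) * ∏ i, (b i - a i) / m ≤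
      Nat.card {σ : Equiv.Perm (Fin k) //
        ∃ z : Fin k → ℝ, (∀ i, z i ∈ Set.Icc (a i) (b i)) ∧
          Function.Injective z ∧ (∀ i j, σ i < σ j ↔ z i < z j)} :=
  stmt_0_general k m a b ha hb hlen
end

section
/- Let t_0 ≤ t_1 ≤ ⋯ ≤ t_k be integers and a_1,…,a_k integers with a_i ≤ t_i for each i. Then for each 2 ≤ i ≤ k, log₂(1 + |a_i − a_{i−1}|) ≤ log₂(1 + t_i − a_i) + log₂(1 + t_{i−1} − a_{i−1}) + (t_i − t_{i−1}) · log₂(e). -/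
theorem stmt_6 (k : ℕ) (t a : ℕ → ℤ)
    (hmono : ∀ i, i < k → t i ≤ t (i + 1))
    (hat : ∀ i, 1 ≤ i → i ≤ k → a i ≤ t i) :
    ∀ i, 2 ≤ i → i ≤ k →
      Real.logb 2 (1 + |(a i : ℝ) - (a (i - 1) : ℝ)|) ≤
        Real.logb 2 (1 + (t i : ℝ) - (a i : ℝ)) +
        Real.logb 2 (1 + (t (i - 1) : ℝ) - (a (i - 1) : ℝ)) +
        ((t i : ℝ) - (t (i - 1) : ℝ)) * Real.logb 2 (Real.exp 1) := by
  intro i h2 hk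
  have hi1 : 1 ≤ i := le_trans (by norm_num) h2
  have hstep : t (i - 1) ≤ t i := by
    have h := hmono (i - 1) (by omega)
    have : i - 1 + 1 = i := by omega
    rwa [this] at h
  have ha1 : (a i : ℝ) ≤ (t i : ℝ) := by exact_mod_cast hat i hi1 hk
  have ha2 : (a (i-1) : ℝ) ≤ (t (i-1) : ℝ) := by
    exact_mod_cast hat (i-1) (by omega) (by omega)
  have ht : (t (i-1) : ℝ) ≤ (t i : ℝ) := by exact_mod_cast hstep
  have hx : (0:ℝ) ≤ (t i : ℝ) - (a i : ℝ) := by linarith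
  have hy : (0:ℝ) ≤ (t (i-1) : ℝ) - (a (i-1) : ℝ) := by linarith
  have hz : (0:ℝ) ≤ (t i : ℝ) - (t (i-1) : ℝ) := by linarith
  set x : ℝ := (t i : ℝ) - (a i : ℝ)
  set y : ℝ := (t (i-1) : ℝ) - (a (i-1) : ℝ)
  set z : ℝ := (t i : ℝ) - (t (i-1) : ℝ)
  have habs : |(a i : ℝ) - (a (i-1) : ℝ)| ≤ x + y + z := by
    rw [abs_le]
    constructor <;> [skip; skip] <;>
      · simp only [x, y, z]; linarith
  have hprod : 1 + |(a i : ℝ) - (a (i-1) : ℝ)| ≤ (1 + x) * (1 + y) * (1 + z) := by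
    have habspos : (0:ℝ) ≤ |(a i : ℝ) - (a (i-1) : ℝ)| := abs_nonneg _
    nlinarith [mul_nonneg hx hy, mul_nonneg hy hz, mul_nonneg hx hz,
      mul_nonneg (mul_nonneg hx hy) hz]
  have hxpos : (0:ℝ) < 1 + x := by linarith
  have hypos : (0:ℝ) < 1 + y := by linarith
  have hzpos : (0:ℝ) < 1 + z := by linarith
  have h1 : Real.logb 2 (1 + |(a i : ℝ) - (a (i-1) : ℝ)|) ≤
      Real.logb 2 ((1 + x) * (1 + y) * (1 + z)) := by
    exact Real.logb_le_logb_of_le (by norm_num) (by positivity) hprod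
  have h2' : Real.logb 2 ((1 + x) * (1 + y) * (1 + z)) =
      Real.logb 2 (1 + x) + Real.logb 2 (1 + y) + Real.logb 2 (1 + z) := by
    rw [Real.logb_mul (by positivity) (by positivity),
        Real.logb_mul (by positivity) (by positivity)]
  have h3 : Real.logb 2 (1 + z) ≤ z * Real.logb 2 (Real.exp 1) := by
    have hlog : Real.log (1 + z) ≤ z := by
      have := Real.log_le_sub_one_of_pos hzpos
      linarith
    have hlog2 : (0:ℝ) < Real.log 2 := Real.log_pos (by norm_num)
    rw [Real.logb, Real.logb, Real.log_exp]
    rw [div_le_iff₀ hlog2] at *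
    calc Real.log (1 + z) ≤ z := hlog
      _ = z * (1 / Real.log 2) * Real.log 2 := by field_simp
  have hfin : 1 + x = 1 + (t i : ℝ) - (a i : ℝ) := by ring
  have hfin2 : 1 + y = 1 + (t (i-1) : ℝ) - (a (i-1) : ℝ) := by ring
  calc Real.logb 2 (1 + |(a i : ℝ) - (a (i-1) : ℝ)|)
      ≤ Real.logb 2 (1 + x) + Real.logb 2 (1 + y) + Real.logb 2 (1 + z) := by
        rw [← h2']; exact h1
    _ ≤ Real.logb 2 (1 + x) + Real.logb 2 (1 + y) + z * Real.logb 2 (Real.exp 1) := by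
        linarith
    _ = _ := by rw [hfin, hfin2]
end

section
/- Let σ be a topological ordering of a DAG G on X (so a(x) < a(y) whenever x → y is an edge, where a(x) is the position of x in σ) and let L be a linear order on X compatible with G, with b(x) the position of x in L. Define r(x) = a(x) + b(x) and ℓ(x) = max(0, max{ a(y)+b(y) : a(y) < a(x) and b(y) < b(x) }). Then for any choice of distinct reals w(x) ∈ [ℓ(x), r(x)] for x ∈ X, the linear order on X induced by sorting by w is compatible with G. -/
open Classical in
theorem stmt_9 {X : Type*} [Fintype X] {n : ℕ} (E : X → X → Prop)
    (a b : X ≃ Fin n)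
    (ha : ∀ x y, E x y → a x < a y)
    (hb : ∀ x y, E x y → b x < b y)
    (A B : X → ℕ) (hA : ∀ x, A x = (a x : ℕ) + 1) (hB : ∀ x, B x = (b x : ℕ) + 1)
    (r ℓ : X → ℕ) (hr : ∀ x, r x = A x + B x)
    (hℓ : ∀ x, ℓ x =
      (Finset.univ.filter (fun y => A y < A x ∧ B y < B x)).sup (fun y => A y + B y))
    (w : X → ℝ) (hwinj : Function.Injective w)
    (hw : ∀ x, w x ∈ Set.Icc (ℓ x : ℝ) (r x : ℝ)) :
    ∀ x y, E x y → w x < w y := by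
  intro x y hxy
  have hAx : A x < A y := by
    simp only [hA]; exact Nat.add_lt_add_right (ha x y hxy) 1
  have hBx : B x < B y := by
    simp only [hB]; exact Nat.add_lt_add_right (hb x y hxy) 1
  have hmem : x ∈ Finset.univ.filter (fun z => A z < A y ∧ B z < B y) := by
    simp [hAx, hBx]
  have hle : r x ≤ ℓ y := by
    rw [hr, hℓ]
    exact Finset.le_sup (f := fun z => A z + B z) hmem
  have h1 : w x ≤ (r x : ℝ) := (hw x).2
  have h2 : (ℓ y : ℝ) ≤ w y := (hw y).1
  have : w x ≤ w y := h1.trans ((Nat.cast_le.mpr hle).trans h2)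
  refine lt_of_le_of_ne this (fun h => ?_)
  have hne : x ≠ y := fun h' => lt_irrefl (A x) (h' ▸ hAx)
  exact hne (hwinj h)
end

section
/- Let h₁,…,h_N be a sequence of nonnegative integers (heights of leaders in left-to-right order) and let F ⊆ {1,…,N} be a set of 'locked' indices. Suppose that for every index j ∉ F with h_j < H, there exists an index j' with |j − j'| ≤ 2 and h_{j'} < h_j. Then for every k < H, every index j with h_j ≤ k is within distance 2k of some locked index j' ∈ F with h_{j'} ≤ k. -/
theorem stmt_16 {N : ℕ} (h : Fin N → ℕ) (F : Finset (Fin N)) (H : ℕ)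
    (hlocal : ∀ j : Fin N, j ∉ F → h j < H →
      ∃ j' : Fin N, ((j : ℤ) - (j' : ℤ)).natAbs ≤ 2 ∧ h j' < h j) :
    ∀ k, k < H → ∀ j : Fin N, h j ≤ k →
      ∃ j' ∈ F, ((j : ℤ) - (j' : ℤ)).natAbs ≤ 2 * k ∧ h j' ≤ k := by
  intro k hk
  induction k with
  | zero =>
    intro j hj
    by_cases hjF : j ∈ F
    · exact ⟨j, hjF, by simp, hj⟩
    · obtain ⟨j', _, hlt⟩ := hlocal j hjF (lt_of_le_of_lt hj hk)
      omega
  | succ m ih =>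
    intro j hj
    by_cases hjF : j ∈ F
    · exact ⟨j, hjF, by simp, hj⟩
    · obtain ⟨j', hd, hlt⟩ := hlocal j hjF (lt_of_le_of_lt hj hk)
      by_cases hm : h j' ≤ m
      · obtain ⟨j'', hF, hd2, hh⟩ := ih (by omega) j' hm
        refine ⟨j'', hF, ?_, by omega⟩
        have := abs_sub_abs_le_abs_sub ((j:ℤ) - j'') ((j':ℤ) - j'')
        omega
      · omega
end

section
/- Under the hypotheses of the previous statement, if additionally |{j ∈ F : h_j ≤ k}| ≤ 2^{k+2} for every k, then for every k < H the total number of indices j with h_j ≤ k is at most (4k+1) · 2^{k+2} ≤ 16 · 4^k. -/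
/-!
Following strictly decreasing heights from an index of height `h_j < H` reaches a locked index
after at most `h_j` steps of length at most `2`, so every index of height `≤ k` lies within
distance `2k` of a locked index of height `≤ k`. There are at most `2^(k+2)` of those, and each
has at most `4k + 1` indices within distance `2k`.
-/

namespace Fin

variable {N : ℕ}

lemma exists_mem_near_of_local_decrease (h : Fin N → ℕ) (F : Finset (Fin N)) (H d : ℕ)
    (hlocal : ∀ j : Fin N, j ∉ F → h j < H →
      ∃ j' : Fin N, ((j : ℤ) - (j' : ℤ)).natAbs ≤ d ∧ h j' < h j)
    (j : Fin N) (hj : h j < H) :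
    ∃ i ∈ F, h i ≤ h j ∧ ((j : ℤ) - (i : ℤ)).natAbs ≤ d * h j := by
  induction hn : h j using Nat.strong_induction_on generalizing j with
  | _ n ih =>
    by_cases hjF : j ∈ F
    · exact ⟨j, hjF, hn.le, by simp⟩
    obtain ⟨j', hjj', hlt⟩ := hlocal j hjF hj
    obtain ⟨i, hiF, hi, hj'i⟩ := ih (h j') (hn ▸ hlt) j' (hlt.trans hj) rfl
    have hd : d * h j' + d ≤ d * n := by
      rw [← Nat.mul_succ]; exact Nat.mul_le_mul_left d (hn ▸ hlt)
    exact ⟨i, hiF, by omega, by omega⟩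

lemma card_filter_natAbs_sub_le (i : Fin N) (r : ℕ) :
    (Finset.univ.filter (fun j : Fin N => ((j : ℤ) - (i : ℤ)).natAbs ≤ r)).card ≤ 2 * r + 1 := by
  have hIcc : (Finset.univ.filter (fun j : Fin N => ((j : ℤ) - (i : ℤ)).natAbs ≤ r)).card
      ≤ (Finset.Icc ((i : ℤ) - r) ((i : ℤ) + r)).card := by
    refine Finset.card_le_card_of_injOn (fun j : Fin N => ((j : ℕ) : ℤ)) ?_ ?_
    · intro j hj
      simp only [Finset.coe_filter, Finset.mem_univ, true_and, Set.mem_ofPred_eq] at hj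
      simp only [Finset.coe_Icc, Set.mem_Icc]
      omega
    · intro a _ b _ hab
      exact Fin.ext (by simpa using hab)
  rw [Int.card_Icc] at hIcc
  omega

lemma card_le_of_forall_exists_near (s t : Finset (Fin N)) (r : ℕ)
    (hst : ∀ j ∈ s, ∃ i ∈ t, ((j : ℤ) - (i : ℤ)).natAbs ≤ r) :
    s.card ≤ t.card * (2 * r + 1) := by
  have hcover : s ⊆ t.biUnion
      (fun i => Finset.univ.filter (fun j : Fin N => ((j : ℤ) - (i : ℤ)).natAbs ≤ r)) := by
    intro j hj
    obtain ⟨i, hi, hji⟩ := hst j hj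
    exact Finset.mem_biUnion.mpr ⟨i, hi, by simpa using hji⟩
  exact (Finset.card_le_card hcover).trans
    (Finset.card_biUnion_le_card_mul _ _ _ fun i _ => card_filter_natAbs_sub_le i r)

end Fin

lemma Nat.four_mul_add_one_mul_two_pow_le (k : ℕ) :
    (4 * k + 1) * 2 ^ (k + 2) ≤ 16 * 4 ^ k := by
  have hk : 4 * k + 1 ≤ 4 * 2 ^ k := by
    have := Nat.lt_two_pow_self (n := k)
    omega
  calc (4 * k + 1) * 2 ^ (k + 2) ≤ 4 * 2 ^ k * 2 ^ (k + 2) := Nat.mul_le_mul_right _ hk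
    _ = 16 * 4 ^ k := by rw [show (4 : ℕ) = 2 ^ 2 from rfl, ← pow_mul]; ring

theorem stmt_17 {N : ℕ} (h : Fin N → ℕ) (F : Finset (Fin N)) (H : ℕ)
    (hlocal : ∀ j : Fin N, j ∉ F → h j < H →
      ∃ j' : Fin N, ((j : ℤ) - (j' : ℤ)).natAbs ≤ 2 ∧ h j' < h j)
    (hF : ∀ k, (F.filter (fun j => h j ≤ k)).card ≤ 2 ^ (k + 2)) :
    ∀ k, k < H →
      (Finset.univ.filter (fun j : Fin N => h j ≤ k)).card ≤ (4 * k + 1) * 2 ^ (k + 2) ∧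
      (4 * k + 1) * 2 ^ (k + 2) ≤ 16 * 4 ^ k := by
  intro k hk
  refine ⟨?_, Nat.four_mul_add_one_mul_two_pow_le k⟩
  have hnear : ∀ j ∈ Finset.univ.filter (fun j : Fin N => h j ≤ k),
      ∃ i ∈ F.filter (fun j => h j ≤ k), ((j : ℤ) - (i : ℤ)).natAbs ≤ 2 * k := by
    intro j hj
    replace hj : h j ≤ k := (Finset.mem_filter.mp hj).2
    obtain ⟨i, hiF, hij, hji⟩ :=
      Fin.exists_mem_near_of_local_decrease h F H 2 hlocal j (hj.trans_lt hk)
    exact ⟨i, Finset.mem_filter.mpr ⟨hiF, hij.trans hj⟩, by omega⟩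
  calc _ ≤ (F.filter (fun j => h j ≤ k)).card * (2 * (2 * k) + 1) :=
        Fin.card_le_of_forall_exists_near _ _ _ hnear
    _ ≤ 2 ^ (k + 2) * (4 * k + 1) := by rw [← mul_assoc]; exact Nat.mul_le_mul_right _ (hF k)
    _ = (4 * k + 1) * 2 ^ (k + 2) := Nat.mul_comm _ _
end

section
/- Let G be a DAG on a finite set X, let P be a directed path in G, and let Y ⊆ X consist of all vertices not on P together with, for each vertex u ∉ P, its predecessor in P (the last vertex of P with an edge to u, if any) and successor in P (the first vertex of P with an edge from u, if any). Let H be the graph on Y consisting of all edges of G between vertices of Y, plus edges making Y ∩ P a path in the order of P. Then for every linear order L on X compatible with G, the restriction of L to Y is compatible with H; moreover |Y| ≤ 3·|X ∖ P|. -/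
open Classical in
theorem stmt_19 {X : Type*} [Fintype X] (E : X → X → Prop) {p : ℕ}
    (P : Fin p ↪ X)
    (hPpath : ∀ j : Fin p, (hj : j.val + 1 < p) → E (P j) (P ⟨j.val + 1, hj⟩))
    (Y : Finset X)
    (hY : ∀ x : X, x ∈ Y ↔
      x ∉ Set.range P ∨
      ∃ (u : X) (j : Fin p), u ∉ Set.range P ∧ x = P j ∧
        ((E (P j) u ∧ ∀ j' : Fin p, E (P j') u → j' ≤ j) ∨
         (E u (P j) ∧ ∀ j' : Fin p, E u (P j') → j ≤ j')))
    (Hrel : X → X → Prop)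
    (hH : ∀ x y : X, Hrel x y ↔
      (x ∈ Y ∧ y ∈ Y ∧ E x y) ∨
      ∃ j j' : Fin p, x = P j ∧ y = P j' ∧ j < j' ∧ x ∈ Y ∧ y ∈ Y ∧
        ∀ j'' : Fin p, j < j'' → j'' < j' → P j'' ∉ Y)
    (L : X → X → Prop) (hL : IsStrictTotalOrder X L)
    (hcompat : ∀ x y : X, E x y → L x y) :
    (∀ x y : X, Hrel x y → L x y) ∧
    Y.card ≤ 3 * (Finset.univ.filter (fun x : X => x ∉ Set.range P)).card := by
  have key : ∀ d : ℕ, ∀ j j' : Fin p, j.val + d + 1 = j'.val → L (P j) (P j') := by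
    intro d
    induction d with
    | zero =>
      intro j j' h
      have hj : j.val + 1 < p := by have := j'.isLt; omega
      have h1 := hcompat _ _ (hPpath j hj)
      have h2 : P ⟨j.val + 1, hj⟩ = P j' := congrArg P (Fin.ext (by simpa using h))
      rwa [h2] at h1
    | succ d ih =>
      intro j j' h
      have hj : j.val + 1 < p := by have := j'.isLt; omega
      have h1 := hcompat _ _ (hPpath j hj)
      have h2 := ih ⟨j.val + 1, hj⟩ j' (by simp; omega)
      exact hL.trans _ _ _ h1 h2
  constructor
  · intro x y hxy
    rcases (hH x y).mp hxy with ⟨_, _, hE⟩ | ⟨j, j', rfl, rfl, hlt, _⟩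
    · exact hcompat _ _ hE
    · exact key (j'.val - j.val - 1) j j' (by omega)
  · set S := Finset.univ.filter (fun x : X => x ∉ Set.range P) with hS
    set A := S.image (fun u => if h : ∃ j : Fin p, E (P j) u ∧ ∀ j' : Fin p, E (P j') u → j' ≤ j then P h.choose else u) with hA
    set B := S.image (fun u => if h : ∃ j : Fin p, E u (P j) ∧ ∀ j' : Fin p, E u (P j') → j ≤ j' then P h.choose else u) with hB
    have hsub : Y ⊆ S ∪ (A ∪ B) := by
      intro x hx
      rcases (hY x).mp hx with hx | ⟨u, j, hu, rfl, hc | hc⟩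
      · exact Finset.mem_union_left _ (Finset.mem_filter.mpr ⟨Finset.mem_univ _, hx⟩)
      · refine Finset.mem_union_right _ (Finset.mem_union_left _ ?_)
        rw [hA, Finset.mem_image]
        refine ⟨u, Finset.mem_filter.mpr ⟨Finset.mem_univ _, hu⟩, ?_⟩
        have hex : ∃ j : Fin p, E (P j) u ∧ ∀ j' : Fin p, E (P j') u → j' ≤ j := ⟨j, hc⟩
        rw [dif_pos hex]
        have h1 := hex.choose_spec
        have : hex.choose = j := le_antisymm (hc.2 _ h1.1) (h1.2 _ hc.1)
        rw [this]
      · refine Finset.mem_union_right _ (Finset.mem_union_right _ ?_)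
        rw [hB, Finset.mem_image]
        refine ⟨u, Finset.mem_filter.mpr ⟨Finset.mem_univ _, hu⟩, ?_⟩
        have hex : ∃ j : Fin p, E u (P j) ∧ ∀ j' : Fin p, E u (P j') → j ≤ j' := ⟨j, hc⟩
        rw [dif_pos hex]
        have h1 := hex.choose_spec
        have : hex.choose = j := le_antisymm (h1.2 _ hc.1) (hc.2 _ h1.1)
        rw [this]
    calc Y.card ≤ (S ∪ (A ∪ B)).card := Finset.card_le_card hsub
      _ ≤ S.card + (A ∪ B).card := Finset.card_union_le _ _
      _ ≤ S.card + (A.card + B.card) := by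
          exact Nat.add_le_add_left (Finset.card_union_le _ _) _
      _ ≤ S.card + (S.card + S.card) := by
          exact Nat.add_le_add_left (Nat.add_le_add (Finset.card_image_le) (Finset.card_image_le)) _
      _ = 3 * S.card := by ring
end
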